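/- arXiv:2202.12373 — 5 statements merged into one kernel-verified Lean document; each statement's English description precedes it below -/
import Mathlib

section
/- Let E be a real normed vector space, let γ, T ∈ ℝ, and let J : ℝ → (E →L[ℝ] E) be a family of continuous linear maps. Suppose a : ℝ → E is twice differentiable and satisfies the damped second-order equation a''(t) − γ·a'(t) = J(t)(a(t)) for all t ∈ ℝ. Define b : ℝ → E by b(τ) = a(T − τ). Then b is twice differentiable and satisfies b''(τ) + γ·b'(τ) = J(T − τ)(b(τ)) for all τ ∈ ℝ. (Hence the time-reversed adjoint equation of a heavy-ball ODE is again a heavy-ball ODE with the same damping parameter γ.) -/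
/-- The time-reversed adjoint equation of a heavy-ball ODE is again a heavy-ball ODE
with the same damping parameter `γ`. -/
theorem stmt_0 {E : Type*} [NormedAddCommGroup E] [NormedSpace ℝ E]
    (γ T : ℝ) (J : ℝ → (E →L[ℝ] E)) (a a' a'' : ℝ → E)
    (ha' : ∀ t : ℝ, HasDerivAt a (a' t) t)
    (ha'' : ∀ t : ℝ, HasDerivAt a' (a'' t) t)
    (heq : ∀ t : ℝ, a'' t - γ • a' t = J t (a t)) :
    ∃ b' b'' : ℝ → E,
      (∀ τ : ℝ, HasDerivAt (fun τ => a (T - τ)) (b' τ) τ) ∧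
      (∀ τ : ℝ, HasDerivAt b' (b'' τ) τ) ∧
      (∀ τ : ℝ, b'' τ + γ • b' τ = J (T - τ) (a (T - τ))) := by
  refine ⟨fun τ => -a' (T - τ), fun τ => a'' (T - τ), fun τ => ?_, fun τ => ?_, fun τ => ?_⟩
  · exact (ha' (T - τ)).comp_const_sub T τ
  · simpa only [neg_neg] using ((ha'' (T - τ)).comp_const_sub T τ).fun_neg
  · rw [← heq, smul_neg, ← sub_eq_add_neg]
end

section
/- Let F be an algebraically closed field, let A be an n × n matrix over F with n ≥ 1, let γ ∈ F, and let B be the 2n × 2n block matrix B = [[0, I], [A, −γ·I]]. Then for every μ ∈ F, μ is an eigenvalue of B (i.e., a root of its characteristic polynomial) if and only if μ² + γμ is an eigenvalue of A. -/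
open Polynomial Matrix

lemma eval_charpoly_eq_det {m : Type*} [DecidableEq m] [Fintype m] {R : Type*} [CommRing R]
    (M : Matrix m m R) (μ : R) :
    M.charpoly.eval μ = (μ • (1 : Matrix m m R) - M).det := by
  rw [Matrix.charpoly, ← Polynomial.coe_evalRingHom, RingHom.map_det]
  congr 1
  ext i j
  rcases eq_or_ne i j with rfl | h
  · simp [Matrix.charmatrix_apply_eq, Matrix.one_apply]
  · simp [Matrix.charmatrix_apply_ne _ _ _ h, Matrix.one_apply_ne h]

/-- Over an algebraically closed field, `μ` is an eigenvalue (root of the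
characteristic polynomial) of the heavy-ball block matrix `B = [[0, I], [A, -γI]]`
iff `μ² + γμ` is an eigenvalue of `A`. -/
theorem stmt_4 {F : Type*} [Field F] [IsAlgClosed F] {n : ℕ} (hn : 1 ≤ n)
    (A : Matrix (Fin n) (Fin n) F) (γ : F) :
    ∀ μ : F,
      (Matrix.fromBlocks 0 1 A
          (-γ • (1 : Matrix (Fin n) (Fin n) F))).charpoly.IsRoot μ ↔
        A.charpoly.IsRoot (μ ^ 2 + γ * μ) := by
  intro μ
  rw [Polynomial.IsRoot, Polynomial.IsRoot, eval_charpoly_eq_det, eval_charpoly_eq_det,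
    ← Matrix.exists_mulVec_eq_zero_iff, ← Matrix.exists_mulVec_eq_zero_iff]
  constructor
  · rintro ⟨v, hv, hveq⟩
    set h : Fin n → F := v ∘ Sum.inl with hh
    set m : Fin n → F := v ∘ Sum.inr with hm
    have hvelim : v = Sum.elim h m := by
      funext i; cases i <;> rfl
    rw [hvelim, sub_mulVec, Matrix.fromBlocks_mulVec, smul_mulVec, one_mulVec] at hveq
    simp only [Sum.elim_comp_inl, Sum.elim_comp_inr] at hveq
    have h1 : μ • h - m = 0 := by
      funext i
      have := congrFun hveq (Sum.inl i)
      simpa [Matrix.zero_mulVec, Matrix.one_mulVec] using this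
    have h2 : μ • m - (A *ᵥ h + (-γ • (1 : Matrix (Fin n) (Fin n) F)) *ᵥ m) = 0 := by
      funext i
      have := congrFun hveq (Sum.inr i)
      simpa using this
    have hm' : m = μ • h := (sub_eq_zero.mp h1).symm
    have hA : A *ᵥ h = (μ ^ 2 + γ * μ) • h := by
      have h2' := sub_eq_zero.mp h2
      rw [hm', smul_mulVec, one_mulVec, smul_smul, smul_smul] at h2'
      have hstep : A *ᵥ h = (μ * μ) • h - (-γ * μ) • h := by
        rw [eq_sub_iff_add_eq, ← h2']
      rw [hstep, ← sub_smul]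
      congr 1
      ring
    have hhne : h ≠ 0 := by
      intro h0
      apply hv
      rw [hvelim, h0, hm', h0, smul_zero]
      funext i; cases i <;> rfl
    exact ⟨h, hhne, by rw [sub_mulVec, smul_mulVec, one_mulVec, hA, sub_self]⟩
  · rintro ⟨h, hhne, hveq⟩
    have hA : A *ᵥ h = (μ ^ 2 + γ * μ) • h := by
      rw [sub_mulVec] at hveq
      have := sub_eq_zero.mp hveq
      rw [smul_mulVec, one_mulVec] at this
      exact this.symm
    refine ⟨Sum.elim h (μ • h), ?_, ?_⟩
    · intro h0
      apply hhne
      funext i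
      exact congrFun h0 (Sum.inl i)
    · rw [sub_mulVec, Matrix.fromBlocks_mulVec, smul_mulVec, one_mulVec]
      simp only [Sum.elim_comp_inl, Sum.elim_comp_inr]
      funext i
      cases i with
      | inl i => simp
      | inr i =>
        simp only [neg_smul, neg_mulVec, smul_mulVec, one_mulVec, Pi.sub_apply,
          Pi.smul_apply, Pi.add_apply, Pi.neg_apply, Sum.elim_inr, Sum.elim_inl,
          smul_eq_mul, Pi.zero_apply, hA]
        ring
end

section
/- Let P and Q be n × n complex matrices and c ∈ ℂ, and let N be the 2n × 2n block matrix N = [[0, P], [Q, −c·I]]. Let ν₁, …, νₙ be the eigenvalues of P·Q listed with algebraic multiplicity (the roots of its characteristic polynomial over ℂ). Then the characteristic polynomial of N factors as det(X·I − N) = ∏_{i=1}^{n} (X² + c·X − νᵢ). Consequently, the 2n eigenvalues of N (with multiplicity) can be arranged into n pairs such that the two eigenvalues in each pair sum to −c. -/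
open Polynomial

private lemma det_fromBlocks_smul_one' {n : ℕ} (A B Cm : Matrix (Fin n) (Fin n) ℂ[X])
    (r : ℂ[X]) (hr : r ≠ 0) :
    (Matrix.fromBlocks A B Cm (r • 1)).det = (A * (r • 1) - B * Cm).det := by
  have h : Matrix.fromBlocks A B Cm (r • (1 : Matrix (Fin n) (Fin n) ℂ[X])) *
      Matrix.fromBlocks (r • 1) 0 (-Cm) 1
      = Matrix.fromBlocks (A * (r • 1) - B * Cm) B 0 (r • 1) := by
    rw [Matrix.fromBlocks_multiply]
    congr 1 <;> simp [Matrix.mul_smul, Matrix.smul_mul, sub_eq_add_neg]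
  have hd := congrArg Matrix.det h
  rw [Matrix.det_mul, Matrix.det_fromBlocks_zero₁₂, Matrix.det_fromBlocks_zero₂₁,
    Matrix.det_one, mul_one, Matrix.det_smul, Matrix.det_one, mul_one] at hd
  exact mul_right_cancel₀ (pow_ne_zero _ hr) hd

private lemma quad_factor (a b : ℂ) :
    (X : ℂ[X]) ^ 2 + C (-(a + b)) * X - C (-(a * b)) = (X - C a) * (X - C b) := by
  simp only [C_neg, C_add, C_mul]
  ring

/-- If `ν₁, …, νₙ` are the eigenvalues (with multiplicity) of `P * Q`, then the
characteristic polynomial of `N = [[0, P], [Q, -cI]]` factors as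
`∏ i (X² + cX - νᵢ)`; consequently the `2n` eigenvalues of `N` can be arranged
into `n` pairs, each pair summing to `-c`. -/
theorem stmt_6 {n : ℕ} (P Q : Matrix (Fin n) (Fin n) ℂ) (c : ℂ)
    (ν : Fin n → ℂ)
    (hν : (P * Q).charpoly = ∏ i : Fin n, (X - C (ν i))) :
    (Matrix.fromBlocks 0 P Q
        (-c • (1 : Matrix (Fin n) (Fin n) ℂ))).charpoly =
      ∏ i : Fin n, (X ^ 2 + C c * X - C (ν i)) ∧
    ∃ μ₁ μ₂ : Fin n → ℂ,
      (Matrix.fromBlocks 0 P Q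
          (-c • (1 : Matrix (Fin n) (Fin n) ℂ))).charpoly =
        ∏ i : Fin n, ((X - C (μ₁ i)) * (X - C (μ₂ i))) ∧
      ∀ i : Fin n, μ₁ i + μ₂ i = -c := by
  set r : ℂ[X] := X + C c with hr
  have hrne : r ≠ 0 := by
    intro h
    have := congrArg (fun p => p.coeff 1) h
    simp [hr] at this
  -- Step 1: identify the charmatrix of the block matrix
  have h1 : Matrix.charmatrix (Matrix.fromBlocks 0 P Q (-c • (1 : Matrix (Fin n) (Fin n) ℂ)))
      = Matrix.fromBlocks (Matrix.scalar (Fin n) (X : ℂ[X])) (-(P.map C)) (-(Q.map C))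
          (r • 1) := by
    rw [Matrix.charmatrix_fromBlocks]
    have hA : Matrix.charmatrix (0 : Matrix (Fin n) (Fin n) ℂ)
        = Matrix.scalar (Fin n) (X : ℂ[X]) := by
      simp [Matrix.charmatrix]
    have hD : Matrix.charmatrix (-c • (1 : Matrix (Fin n) (Fin n) ℂ)) = r • 1 := by
      ext i j
      by_cases h : i = j <;>
        simp [Matrix.charmatrix, Matrix.diagonal, Matrix.one_apply, hr, h, mul_comm]
    rw [hA, hD]
  -- Step 2: Schur-type reduction
  have h2 : Matrix.scalar (Fin n) (X : ℂ[X]) * (r • 1) - (-(P.map C)) * (-(Q.map C))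
      = Matrix.scalar (Fin n) (X * r) - (P * Q).map C := by
    rw [Matrix.neg_mul, Matrix.mul_neg, neg_neg, ← Matrix.map_mul]
    congr 1
    ext i j
    by_cases h : i = j <;> simp [Matrix.scalar, Matrix.diagonal, Matrix.one_apply, h, mul_comm]
  -- Step 3: the substitution homomorphism X ↦ X * r
  set φ : ℂ[X] →+* ℂ[X] := eval₂RingHom (C : ℂ →+* ℂ[X]) (X * r) with hφ
  have h3 : φ.mapMatrix (Matrix.charmatrix (P * Q))
      = Matrix.scalar (Fin n) (X * r) - (P * Q).map C := by
    ext i j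
    simp only [RingHom.mapMatrix_apply, Matrix.map_apply, Matrix.charmatrix_apply,
      Matrix.sub_apply, Matrix.scalar_apply]
    by_cases h : i = j <;>
      simp [Matrix.diagonal, h, hφ, coe_eval₂RingHom, eval₂_sub, eval₂_X, eval₂_C]
  have h4 : (Matrix.fromBlocks 0 P Q
      (-c • (1 : Matrix (Fin n) (Fin n) ℂ))).charpoly = φ ((P * Q).charpoly) := by
    rw [Matrix.charpoly, h1, det_fromBlocks_smul_one' _ _ _ _ hrne, h2,
      Matrix.charpoly, RingHom.map_det, h3]
  have h5 : (Matrix.fromBlocks 0 P Q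
      (-c • (1 : Matrix (Fin n) (Fin n) ℂ))).charpoly
      = ∏ i : Fin n, (X ^ 2 + C c * X - C (ν i)) := by
    rw [h4, hν, map_prod]
    refine Finset.prod_congr rfl fun i _ => ?_
    simp only [hφ, coe_eval₂RingHom, eval₂_sub, eval₂_mul, eval₂_add, eval₂_X, eval₂_C, hr]
    ring
  refine ⟨h5, ?_⟩
  -- Step 4: pair the roots of each quadratic
  have hsq : ∀ i : Fin n, ∃ z : ℂ, z ^ 2 = c ^ 2 + 4 * ν i := fun i =>
    IsAlgClosed.exists_pow_nat_eq _ two_pos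
  choose z hz using hsq
  refine ⟨fun i => (-c + z i) / 2, fun i => (-c - z i) / 2, ?_, fun i => by ring⟩
  rw [h5]
  refine Finset.prod_congr rfl fun i _ => ?_
  have ha : (-c + z i) / 2 + (-c - z i) / 2 = -c := by ring
  have hb : ((-c + z i) / 2) * ((-c - z i) / 2) = -ν i := by
    have : (-c + z i) * (-c - z i) = c ^ 2 - z i ^ 2 := by ring
    field_simp
    rw [this, hz i]; ring
  have := quad_factor ((-c + z i) / 2) ((-c - z i) / 2)
  rw [ha, hb, neg_neg (ν i), neg_neg c] at this
  exact this
end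

section
/- Let P and Q be n × n complex matrices with n ≥ 1, let c ∈ ℝ, and let N be the 2n × 2n complex block matrix N = [[0, P], [Q, −c·I]]. Then N has an eigenvalue μ ∈ ℂ (a root of its characteristic polynomial) with real part Re(μ) ≥ −c/2. -/
/-! Since the characteristic polynomial of a complex matrix splits, the trace is the sum of the
eigenvalues counted with multiplicity, so some eigenvalue has real part at least the average
`Re(tr N) / 2n`. For `N = [[0, P], [Q, -c I]]` the trace is `-c n`, and the average is `-c / 2`. -/

theorem Multiset.exists_mem_sum_le_card_mul {s : Multiset ℝ} (hs : s ≠ 0) :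
    ∃ x ∈ s, s.sum ≤ card s * x := by
  by_contra! h
  have := Multiset.sum_lt_sum_of_nonempty hs h
  rw [Multiset.sum_map_mul_left, Multiset.map_id', Multiset.map_const', Multiset.sum_replicate,
    nsmul_eq_mul] at this
  exact this.false

theorem Matrix.trace_fromBlocks {m n R : Type*} [Fintype m] [Fintype n] [AddCommMonoid R]
    (A : Matrix m m R) (B : Matrix m n R) (C : Matrix n m R) (D : Matrix n n R) :
    (fromBlocks A B C D).trace = A.trace + D.trace := by
  simp [trace, Fintype.sum_sum_type]

theorem Matrix.exists_isRoot_charpoly_re_trace_le {ι : Type*} [Fintype ι] [DecidableEq ι]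
    [Nonempty ι] (A : Matrix ι ι ℂ) :
    ∃ μ, A.charpoly.IsRoot μ ∧ A.trace.re ≤ Fintype.card ι * μ.re := by
  have hcard : Multiset.card A.charpoly.roots = Fintype.card ι := by
    rw [IsAlgClosed.card_roots_eq_natDegree, charpoly_natDegree_eq_dim]
  have hre : (A.charpoly.roots.map Complex.re).sum = A.trace.re := by
    rw [trace_eq_sum_roots_charpoly]
    exact (map_multiset_sum Complex.reAddGroupHom _).symm
  obtain ⟨_, hx, hle⟩ := Multiset.exists_mem_sum_le_card_mul (s := A.charpoly.roots.map Complex.re)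
    (by simp [← Multiset.card_eq_zero, hcard])
  obtain ⟨μ, hμ, rfl⟩ := Multiset.mem_map.mp hx
  refine ⟨μ, Polynomial.isRoot_of_mem_roots hμ, ?_⟩
  rwa [hre, Multiset.card_map, hcard] at hle

/-- The block matrix `N = [[0, P], [Q, -cI]]` (with `c` real, `n ≥ 1`) has an
eigenvalue with real part at least `-c/2`. -/
theorem stmt_7 {n : ℕ} (hn : 1 ≤ n) (P Q : Matrix (Fin n) (Fin n) ℂ) (c : ℝ) :
    ∃ μ : ℂ,
      (Matrix.fromBlocks 0 P Q
          (-(c : ℂ) • (1 : Matrix (Fin n) (Fin n) ℂ))).charpoly.IsRoot μ ∧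
      (-c / 2 : ℝ) ≤ μ.re := by
  have : Nonempty (Fin n) := Fin.pos_iff_nonempty.mp hn
  set N := Matrix.fromBlocks 0 P Q (-(c : ℂ) • (1 : Matrix (Fin n) (Fin n) ℂ))
  have htrace : N.trace.re = -c * n := by
    simp [N, Matrix.trace_fromBlocks]
  obtain ⟨μ, hroot, hle⟩ := N.exists_isRoot_charpoly_re_trace_le
  refine ⟨μ, hroot, ?_⟩
  rw [htrace, Fintype.card_sum, Fintype.card_fin, Nat.cast_add] at hle
  have hn' : (0 : ℝ) < n := by exact_mod_cast hn
  nlinarith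
end

section
/- Let λ_min, λ_max, λ₁, λ₂ be real numbers with 0 < λ_min ≤ λ₁ ≤ λ_max and λ_min ≤ λ₂ ≤ λ_max. Let z₁ be any complex root of z² + 2√λ_min·z + λ₁ and z₂ any complex root of z² + 2√λ_min·z + λ₂. Then z₂ ≠ 0 and |z₁| / |z₂| ≤ √(λ_max / λ_min). In particular, the ratio of the largest to the smallest modulus among all eigenvalues of the heavy-ball system matrix is at most the square root of the condition number λ_max/λ_min of A. -/
/-!
The quadratic `z² + 2√λ_min z + λ` has nonpositive discriminant whenever `λ ≥ λ_min`, so its roots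
are either a conjugate pair or a double real root; in both cases `|z|² = λ`. Hence
`|z₁| / |z₂| = √(λ₁ / λ₂) ≤ √(λ_max / λ_min)`.
-/

theorem Complex.normSq_eq_of_root_of_sq_le {s c : ℝ} (hdisc : s ^ 2 ≤ c) {z : ℂ}
    (hz : z ^ 2 + 2 * (s : ℂ) * z + c = 0) : Complex.normSq z = c := by
  obtain ⟨x, y⟩ := z
  have hre : x ^ 2 - y ^ 2 + 2 * s * x + c = 0 := by
    simpa [pow_two] using congrArg Complex.re hz
  have him : y * (x + s) = 0 := by
    have := congrArg Complex.im hz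
    simp only [pow_two, add_im, mul_im, mul_re, ofReal_re, ofReal_im, re_ofNat, im_ofNat,
      zero_im] at this
    linarith
  rw [normSq_mk]
  rcases mul_eq_zero.mp him with hy | hxs
  · -- a real root forces the discriminant `s² - c` to vanish, and then `x = -s`
    subst hy
    have hsq : (x + s) ^ 2 = 0 := by nlinarith [sq_nonneg (x + s)]
    have hx : x = -s := by linarith [pow_eq_zero_iff (n := 2) two_ne_zero |>.mp hsq]
    subst hx
    nlinarith
  · have hx : x = -s := by linarith
    subst hx
    nlinarith

theorem Complex.norm_eq_sqrt_of_root_of_sq_le {s c : ℝ} (hdisc : s ^ 2 ≤ c) {z : ℂ}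
    (hz : z ^ 2 + 2 * (s : ℂ) * z + c = 0) : ‖z‖ = √c := by
  rw [norm_def, normSq_eq_of_root_of_sq_le hdisc hz]

theorem stmt_9_general (lam_min lam_max lam₁ lam₂ : ℝ)
    (h0 : 0 < lam_min) (h1l : lam_min ≤ lam₁) (h1u : lam₁ ≤ lam_max)
    (h2l : lam_min ≤ lam₂)
    (z₁ z₂ : ℂ)
    (hz₁ : z₁ ^ 2 + 2 * (Real.sqrt lam_min : ℂ) * z₁ + (lam₁ : ℂ) = 0)
    (hz₂ : z₂ ^ 2 + 2 * (Real.sqrt lam_min : ℂ) * z₂ + (lam₂ : ℂ) = 0) :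
    z₂ ≠ 0 ∧ ‖z₁‖ / ‖z₂‖ ≤ Real.sqrt (lam_max / lam_min) := by
  have hsq : √lam_min ^ 2 = lam_min := Real.sq_sqrt h0.le
  have hn₁ : ‖z₁‖ = √lam₁ := Complex.norm_eq_sqrt_of_root_of_sq_le (hsq.trans_le h1l) hz₁
  have hn₂ : ‖z₂‖ = √lam₂ := Complex.norm_eq_sqrt_of_root_of_sq_le (hsq.trans_le h2l) hz₂
  have hlam₂ : 0 < lam₂ := h0.trans_le h2l
  refine ⟨norm_ne_zero_iff.mp (hn₂ ▸ (Real.sqrt_pos.mpr hlam₂).ne'), ?_⟩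
  rw [hn₁, hn₂, ← Real.sqrt_div (h0.le.trans h1l)]
  exact Real.sqrt_le_sqrt (div_le_div₀ (by linarith) h1u h0 h2l)

/-- With damping `γ = 2√λ_min`, the ratio of moduli of any two roots of the
heavy-ball characteristic quadratics `z² + γ z + λᵢ` (with
`λ_min ≤ λᵢ ≤ λ_max`) is bounded by `√(λ_max / λ_min)`. -/
theorem stmt_9 (lam_min lam_max lam₁ lam₂ : ℝ)
    (h0 : 0 < lam_min) (h1l : lam_min ≤ lam₁) (h1u : lam₁ ≤ lam_max)
    (h2l : lam_min ≤ lam₂) (h2u : lam₂ ≤ lam_max)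
    (z₁ z₂ : ℂ)
    (hz₁ : z₁ ^ 2 + 2 * (Real.sqrt lam_min : ℂ) * z₁ + (lam₁ : ℂ) = 0)
    (hz₂ : z₂ ^ 2 + 2 * (Real.sqrt lam_min : ℂ) * z₂ + (lam₂ : ℂ) = 0) :
    z₂ ≠ 0 ∧ ‖z₁‖ / ‖z₂‖ ≤ Real.sqrt (lam_max / lam_min) :=
  stmt_9_general lam_min lam_max lam₁ lam₂ h0 h1l h1u h2l z₁ z₂ hz₁ hz₂
end
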